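/- For any focused derivation f of S ∣ Γ ⟶_L C, focus(emb_L f) = f, i.e., refocusing the phase-erasure of a focused derivation recovers it exactly. -/

import Mathlib

set_option linter.unusedVariables false
inductive Fma (V : Type) : Type
  | var : V → Fma V
  | unit : Fma V
  | tens : Fma V → Fma V → Fma V

abbrev Stp (V : Type) := Option (Fma V)

def stpF {V : Type} : Stp V → Fma V
  | none => Fma.unit
  | some A => A

def semF {V : Type} : Fma V → List (Fma V) → Fma V
  | A, [] => A
  | A, B :: Γ => semF (A.tens B) Γ

abbrev sem {V : Type} (S : Stp V) (Γ : List (Fma V)) : Fma V := semF (stpF S) Γ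

theorem semF_append {V : Type} (A : Fma V) (Γ Δ : List (Fma V)) :
    semF A (Γ ++ Δ) = semF (semF A Γ) Δ := by
  induction Γ generalizing A with
  | nil => rfl
  | cons B Γ ih => exact ih _

/-- The cut-free skew monoidal sequent calculus. -/
inductive CF {V : Type} : Stp V → List (Fma V) → Fma V → Type
  | ax : CF (some A) [] A
  | uf : CF (some A) Γ C → CF none (A :: Γ) C
  | Il : CF none Γ C → CF (some Fma.unit) Γ C
  | Ir : CF none [] Fma.unit
  | tl : CF (some A) (B :: Γ) C → CF (some (Fma.tens A B)) Γ C
  | tr : CF S Γ A → CF none Δ B → CF S (Γ ++ Δ) (Fma.tens A B)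

mutual
inductive FocL {V : Type} : Stp V → List (Fma V) → Fma V → Type
  | uf : FocL (some A) Γ C → FocL none (A :: Γ) C
  | Il : FocL none Γ C → FocL (some Fma.unit) Γ C
  | tl : FocL (some A) (B :: Γ) C → FocL (some (Fma.tens A B)) Γ C
  | sw : FocR T Γ C → FocL T Γ C

inductive FocR {V : Type} : Stp V → List (Fma V) → Fma V → Type
  | ax : FocR (some (Fma.var X)) [] (Fma.var X)
  | Ir : FocR none [] Fma.unit
  | tr : FocR T Γ A → FocL none Δ B → FocR T (Γ ++ Δ) (Fma.tens A B)
end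

mutual
def embL {V : Type} {S : Stp V} {Γ : List (Fma V)} {C : Fma V} : FocL S Γ C → CF S Γ C
  | .uf f => .uf (embL f)
  | .Il f => .Il (embL f)
  | .tl f => .tl (embL f)
  | .sw f => embR f

def embR {V : Type} {S : Stp V} {Γ : List (Fma V)} {C : Fma V} : FocR S Γ C → CF S Γ C
  | .ax => .ax
  | .Ir => .Ir
  | .tr f g => .tr (embR f) (embL g)
end

def trL {V : Type} {S : Stp V} {Γ Δ : List (Fma V)} {A B : Fma V} :
    FocL S Γ A → FocL none Δ B → FocL S (Γ ++ Δ) (Fma.tens A B)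
  | .uf f, g => .uf (trL f g)
  | .Il f, g => .Il (trL f g)
  | .tl f, g => .tl (trL f g)
  | .sw f, g => .sw (.tr f g)

def axL {V : Type} : (A : Fma V) → FocL (some A) [] A
  | .var X => .sw .ax
  | .unit => .Il (.sw .Ir)
  | .tens A B => .tl (trL (axL A) (.uf (axL B)))

def focus {V : Type} {S : Stp V} {Γ : List (Fma V)} {C : Fma V} : CF S Γ C → FocL S Γ C
  | .ax => axL _
  | .uf f => .uf (focus f)
  | .Il f => .Il (focus f)
  | .Ir => .sw .Ir
  | .tl f => .tl (focus f)
  | .tr f g => trL (focus f) (focus g)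

mutual
theorem focus_embL {V : Type} {S : Stp V} {Γ : List (Fma V)} {C : Fma V} :
    (f : FocL S Γ C) → focus (embL f) = f
  | .uf f => by rw [embL, focus, focus_embL f]
  | .Il f => by rw [embL, focus, focus_embL f]
  | .tl f => by rw [embL, focus, focus_embL f]
  | .sw f => by rw [embL, focus_embR f]

theorem focus_embR {V : Type} {S : Stp V} {Γ : List (Fma V)} {C : Fma V} :
    (f : FocR S Γ C) → focus (embR f) = .sw f
  | .ax => rfl -- focused axioms are atomic, and `axL` η-expands only compound formulae
  | .Ir => rfl
  | .tr f g => by rw [embR, focus, focus_embR f, focus_embL g, trL]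
end

/-- Refocusing the phase-erasure of a focused derivation recovers it exactly. -/
theorem statement16 (V : Type) (S : Stp V) (Γ : List (Fma V)) (C : Fma V)
    (f : FocL S Γ C) : focus (embL f) = f := focus_embL f
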